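/- Let (X, 𝓑), m, X₁, X₂ and κ be as in the two-component example. Then the chain satisfies PRP(m): for every measurable set A, the set of points x ∈ A for which it is not the case that for every N there exists t ≥ N with κ^t x A > 0 has m-measure zero. (Together with the summability of (κ^n m)(A) for A ⊆ X₁ this shows that PRP(m) does not imply ∑_{n≥1} (κ^n m)(A) = ∞ for all positive-measure A.) -/

import Mathlib

open MeasureTheory ProbabilityTheory

/-- `kiter κ n` is the `n`-step kernel of the Markov chain with one-step transition kernel `κ`. -/
noncomputable def kiter {X : Type*} [MeasurableSpace X] (κ : Kernel X X) : ℕ → Kernel X X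
  | 0 => Kernel.id
  | n + 1 => (kiter κ n) ∘ₖ κ

/-- A point `x ∈ A` is Poincaré recurrent with respect to `A` if for every `N` there is
`t ≥ N` with `κ^t x A > 0`. -/
def PoincareRecurrent {X : Type*} [MeasurableSpace X] (κ : Kernel X X) (x : X) (A : Set X) :
    Prop := ∀ N : ℕ, ∃ t : ℕ, N ≤ t ∧ 0 < kiter κ t x A

/-- The chain satisfies `PRP(m)` if for every measurable set `A` the set of points of `A`
that are not Poincaré recurrent with respect to `A` has `m`-measure zero. -/
def PRP {X : Type*} [MeasurableSpace X] (κ : Kernel X X) (m : Measure X) : Prop :=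
  ∀ A : Set X, MeasurableSet A → m {x ∈ A | ¬ PoincareRecurrent κ x A} = 0

/-!
If every point of a set `S` reaches `A ∩ S` in one step with positive probability, then by
induction every point of `S` reaches `A` with positive probability at every time `t ≥ 1`, so
points of `A ∩ S` are Poincaré recurrent. In the two-component example one can take `S = X`
when `m (A ∩ X₂) > 0` (both components jump into `X₂` with a density of `m`), `S = X₁` when
`m (A ∩ X₁) > 0`, and `S = ∅` when `A` is `m`-null; in each case `A \ S` is `m`-null.
-/

section

variable {X : Type*} [MeasurableSpace X] {κ : Kernel X X} {A : Set X}

variable (κ) in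
@[simp]
lemma kiter_one : kiter κ 1 = κ :=
  Kernel.id_comp κ

variable (κ) in
lemma kiter_succ_apply (t : ℕ) (x : X) (hA : MeasurableSet A) :
    kiter κ (t + 1) x A = ∫⁻ y, kiter κ t y A ∂(κ x) :=
  Kernel.comp_apply' _ _ _ hA

lemma kiter_succ_apply_pos {S : Set X} (hA : MeasurableSet A)
    (hS : ∀ y ∈ S, 0 < κ y (A ∩ S)) (t : ℕ) : ∀ x ∈ S, 0 < kiter κ (t + 1) x A := by
  induction t with
  | zero =>
    intro x hx
    rw [kiter_one]
    exact (hS x hx).trans_le (measure_mono Set.inter_subset_left)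
  | succ t ih =>
    intro x hx
    have hsupport : S ⊆ Function.support fun y => kiter κ (t + 1) y A :=
      fun y hy => (ih y hy).ne'
    rw [kiter_succ_apply κ _ _ hA, lintegral_pos_iff_support ((kiter κ (t + 1)).measurable_coe hA)]
    exact (hS x hx).trans_le (measure_mono (Set.inter_subset_right.trans hsupport))

lemma poincareRecurrent_of_mem {S : Set X} (hA : MeasurableSet A)
    (hS : ∀ y ∈ S, 0 < κ y (A ∩ S)) {x : X} (hx : x ∈ S) : PoincareRecurrent κ x A :=
  fun N => ⟨N + 1, N.le_succ, kiter_succ_apply_pos hA hS N x hx⟩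

lemma measure_not_poincareRecurrent_le (m : Measure X) {S : Set X} (hA : MeasurableSet A)
    (hS : ∀ y ∈ S, 0 < κ y (A ∩ S)) : m {x ∈ A | ¬ PoincareRecurrent κ x A} ≤ m (A \ S) :=
  measure_mono fun _ ⟨hxA, hx⟩ => ⟨hxA, fun hxS => hx (poincareRecurrent_of_mem hA hS hxS)⟩

end

theorem stmt14_general {X : Type*} [MeasurableSpace X] (m : Measure X) [IsFiniteMeasure m]
    (X₁ X₂ : Set X) (hX₁ : MeasurableSet X₁)
    (hunion : X₁ ∪ X₂ = Set.univ)
    (κ : Kernel X X)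
    (hκ₁ : ∀ x ∈ X₁, ∀ B : Set X, MeasurableSet B →
      κ x B = m (B ∩ X₁) / (2 * m X₁) + m (B ∩ X₂) / (2 * m X₂))
    (hκ₂ : ∀ x ∈ X₂, ∀ B : Set X, MeasurableSet B → κ x B = m (B ∩ X₂) / m X₂) :
    PRP κ m := by
  have hcover : ∀ x, x ∈ X₁ ∨ x ∈ X₂ := fun x => (hunion ▸ Set.mem_univ x : x ∈ X₁ ∪ X₂)
  intro A hA
  obtain ⟨S, hS, hAS⟩ : ∃ S : Set X, (∀ y ∈ S, 0 < κ y (A ∩ S)) ∧ m (A \ S) = 0 := by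
    by_cases h₂ : m (A ∩ X₂) = 0
    · by_cases h₁ : m (A ∩ X₁) = 0
      · refine ⟨∅, by simp, measure_mono_null (fun x ⟨hxA, _⟩ => ?_) (measure_union_null h₁ h₂)⟩
        rwa [← Set.inter_union_distrib_left, hunion, Set.inter_univ]
      · refine ⟨X₁, fun y hy => ?_, measure_mono_null (fun x ⟨hxA, hx⟩ => ?_) h₂⟩
        · rw [hκ₁ y hy _ (hA.inter hX₁), Set.inter_assoc, Set.inter_self]
          exact (ENNReal.div_pos h₁ (by finiteness)).trans_le le_self_add
        · exact ⟨hxA, (hcover x).resolve_left hx⟩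
    · refine ⟨Set.univ, fun y _ => ?_, by simp⟩
      rw [Set.inter_univ]
      rcases hcover y with hy | hy
      · rw [hκ₁ y hy A hA]
        exact (ENNReal.div_pos h₂ (by finiteness)).trans_le le_add_self
      · rw [hκ₂ y hy A hA]
        exact ENNReal.div_pos h₂ (by finiteness)
  exact nonpos_iff_eq_zero.1 (hAS ▸ measure_not_poincareRecurrent_le m hA hS)

/-- **Corollary for Example 5.** The two-component example satisfies `PRP(m)`:
for every measurable `A`, the set of points of `A` that are not Poincaré recurrent with
respect to `A` is `m`-null. -/
theorem stmt14 {X : Type*} [MeasurableSpace X] (m : Measure X) [IsFiniteMeasure m]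
    (X₁ X₂ : Set X) (hX₁ : MeasurableSet X₁) (hX₂ : MeasurableSet X₂)
    (hdisj : Disjoint X₁ X₂) (hunion : X₁ ∪ X₂ = Set.univ)
    (hm₁ : 0 < m X₁) (hm₂ : 0 < m X₂)
    (κ : Kernel X X) [IsMarkovKernel κ]
    (hκ₁ : ∀ x ∈ X₁, ∀ B : Set X, MeasurableSet B →
      κ x B = m (B ∩ X₁) / (2 * m X₁) + m (B ∩ X₂) / (2 * m X₂))
    (hκ₂ : ∀ x ∈ X₂, ∀ B : Set X, MeasurableSet B → κ x B = m (B ∩ X₂) / m X₂) :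
    PRP κ m :=
  stmt14_general m X₁ X₂ hX₁ hunion κ hκ₁ hκ₂
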